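/- Let d = 2, let x_1,…,x_N be pairwise distinct points in ℝ² with particle volumes V_1,…,V_N > 0, let w be a reference weight function, h > 0, ρ > 0, Δt > 0, c₀ > 0. Assume the semi-regularity condition max_i Σ_{j=1}^N V_j |x_i − x_j| |ẇ_h(|x_i − x_j|)| ≤ 2 + c₀ Δt. Let Λ = Λ_fl ∪ Λ_sf ⊆ {1,…,N} (disjoint union), let u* : Λ → ℝ², and let p : Λ → ℝ satisfy p_i = 0 for i ∈ Λ_sf and the discrete Poisson equation (Δp)_i = (ρ/Δt)(∇·u*)_i for i ∈ Λ_fl, where all discrete operators are taken over Λ. Then ‖∇p‖_{2,Λ} ≤ (2 + c₀Δt)(ρ/Δt) ‖u*‖_{2,Λ}. -/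

import Mathlib

open MeasureTheory Finset
open scoped BigOperators RealInnerProductSpace

noncomputable section

namespace ISPH

/-- Points of `ℝ^d`. -/
abbrev Pt (d : ℕ) := EuclideanSpace ℝ (Fin d)

/-- A reference weight function for dimension `d` with support radius `r₀`. -/
structure IsRefWeight (d : ℕ) (w : ℝ → ℝ) (r₀ : ℝ) : Prop where
  r0_pos : 0 < r₀
  smooth : ContDiffOn ℝ 2 w (Set.Ici 0)
  pos : ∀ r : ℝ, 0 < r → r < r₀ → 0 < w r
  eq_zero : ∀ r : ℝ, r₀ ≤ r → w r = 0
  deriv_neg : ∀ r : ℝ, 0 < r → r < r₀ → deriv w r < 0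
  deriv_zero : deriv w 0 = 0
  deriv_eq_zero : ∀ r : ℝ, r₀ ≤ r → deriv w r = 0
  unity : (∫ y : Pt d, w ‖y‖) = 1

/-- The scaled weight function `w_h`. -/
def wh (d : ℕ) (h : ℝ) (w : ℝ → ℝ) : ℝ → ℝ := fun r => (h ^ d)⁻¹ * w (r / h)

/-- `ẇ_h`, the derivative of the scaled weight function. -/
def dwh (d : ℕ) (h : ℝ) (w : ℝ → ℝ) : ℝ → ℝ := deriv (wh d h w)

variable {d N : ℕ}

/-- `∇w_h(|x i − x j|)`; equal to `0` when `i = j`. -/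
def gradW (x : Fin N → Pt d) (dw : ℝ → ℝ) (i j : Fin N) : Pt d :=
  (dw ‖x i - x j‖ / ‖x i - x j‖) • (x i - x j)

/-- `C i j = −2 ẇ_h(|x_i − x_j|)/|x_i − x_j|` off the diagonal, `0` on it. -/
def Cmat (x : Fin N → Pt d) (dw : ℝ → ℝ) (i j : Fin N) : ℝ :=
  if i = j then 0 else -2 * dw ‖x i - x j‖ / ‖x i - x j‖

/-- Discrete divergence over `Λ`. -/
def dDiv (x : Fin N → Pt d) (V : Fin N → ℝ) (dw : ℝ → ℝ) (Λ : Finset (Fin N))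
    (φ : Fin N → Pt d) (i : Fin N) : ℝ :=
  ∑ j ∈ Λ, V j * ⟪φ j + φ i, gradW x dw i j⟫

/-- Discrete gradient over `Λ`. -/
def dGrad (x : Fin N → Pt d) (V : Fin N → ℝ) (dw : ℝ → ℝ) (Λ : Finset (Fin N))
    (ψ : Fin N → ℝ) (i : Fin N) : Pt d :=
  ∑ j ∈ Λ, (V j * (ψ j - ψ i)) • gradW x dw i j

/-- Discrete Laplacian over `Λ` (for scalar- or vector-valued functions). -/
def dLap {F : Type*} [NormedAddCommGroup F] [NormedSpace ℝ F]
    (x : Fin N → Pt d) (V : Fin N → ℝ) (dw : ℝ → ℝ) (Λ : Finset (Fin N))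
    (φ : Fin N → F) (i : Fin N) : F :=
  (2 : ℝ) • ∑ j ∈ Λ.erase i,
    ((V j / ‖x i - x j‖) * ⟪‖x i - x j‖⁻¹ • (x i - x j), gradW x dw i j⟫) • (φ i - φ j)

/-- Discrete inner product over `Λ`. -/
def dInner {F : Type*} [NormedAddCommGroup F] [InnerProductSpace ℝ F]
    (V : Fin N → ℝ) (Λ : Finset (Fin N)) (φ ψ : Fin N → F) : ℝ :=
  ∑ i ∈ Λ, V i * ⟪φ i, ψ i⟫

/-- Square of the discrete `L²` norm over `Λ`. -/
def l2normSq {F : Type*} [NormedAddCommGroup F]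
    (V : Fin N → ℝ) (Λ : Finset (Fin N)) (φ : Fin N → F) : ℝ :=
  ∑ i ∈ Λ, V i * ‖φ i‖ ^ 2

/-- Discrete `L²` norm over `Λ`. -/
def l2norm {F : Type*} [NormedAddCommGroup F]
    (V : Fin N → ℝ) (Λ : Finset (Fin N)) (φ : Fin N → F) : ℝ :=
  Real.sqrt (l2normSq V Λ φ)

/-- Square of the discrete `H¹₀` seminorm over `Λ`. -/
def h1semiSq {F : Type*} [NormedAddCommGroup F]
    (x : Fin N → Pt d) (V : Fin N → ℝ) (dw : ℝ → ℝ) (Λ : Finset (Fin N))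
    (φ : Fin N → F) : ℝ :=
  ∑ i ∈ Λ, V i * ∑ j ∈ Λ.erase i,
    V j * (‖φ i - φ j‖ ^ 2 / ‖x i - x j‖) * |dw ‖x i - x j‖|

/-- Discrete `H¹₀` seminorm over `Λ`. -/
def h1semi {F : Type*} [NormedAddCommGroup F]
    (x : Fin N → Pt d) (V : Fin N → ℝ) (dw : ℝ → ℝ) (Λ : Finset (Fin N))
    (φ : Fin N → F) : ℝ :=
  Real.sqrt (h1semiSq x V dw Λ φ)

/-- Discrete `H₀⁻¹` seminorm over `Λ`. -/
def hm1semi {F : Type*} [NormedAddCommGroup F] [InnerProductSpace ℝ F]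
    (x : Fin N → Pt d) (V : Fin N → ℝ) (dw : ℝ → ℝ) (Λ : Finset (Fin N))
    (φ : Fin N → F) : ℝ :=
  sSup { r : ℝ | ∃ χ : Fin N → F, h1semi x V dw Λ χ ≠ 0 ∧
    r = dInner V Λ φ χ / h1semi x V dw Λ χ }

/-- There is a chain from `i` ending in `target`, with all indices before the last
one in `inter`, and consecutive distances strictly between `0` and `R`. -/
def Chain (x : Fin N → Pt d) (R : ℝ) (inter target : Finset (Fin N)) (i : Fin N) : Prop :=
  ∃ (ζ : ℕ) (c : ℕ → Fin N), c 0 = i ∧ (∀ l < ζ, c l ∈ inter) ∧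
    (∀ l < ζ, 0 < ‖x (c l) - x (c (l + 1))‖ ∧ ‖x (c l) - x (c (l + 1))‖ < R) ∧
    c ζ ∈ target

end ISPH

open ISPH

/-! Testing the Poisson equation against `p`, which vanishes on `Λsf`, and summing by parts
twice (the Laplacian against `p`, the divergence against `p`) gives the energy identity
`|p|²_{H¹₀} = (ρ/Δt) ⟨∇p, u*⟩`; here `ẇ_h ≤ 0` turns `-⟨p, Δp⟩` into the `H¹₀` seminorm.
Cauchy–Schwarz in each row, weighted by `V_j |x_i - x_j| |ẇ_h|`, and the semi-regularity
bound give `‖∇p‖² ≤ (2 + c₀Δt) |p|²_{H¹₀}`; Cauchy–Schwarz for `⟨∇p, u*⟩` then yields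
`‖∇p‖² ≤ (2 + c₀Δt)(ρ/Δt) ‖∇p‖ ‖u*‖`. -/

namespace ISPH

variable {d N : ℕ}

theorem IsRefWeight.dwh_nonpos {w : ℝ → ℝ} {r₀ : ℝ} (hw : IsRefWeight d w r₀) {h : ℝ}
    (hh : 0 < h) {r : ℝ} (hr : 0 < r) : dwh d h w r ≤ 0 := by
  have hrh : 0 < r / h := div_pos hr hh
  have hw' : HasDerivAt w (deriv w (r / h)) (r / h) :=
    ((hw.smooth.contDiffAt (Ici_mem_nhds hrh)).differentiableAt (by norm_num)).hasDerivAt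
  have hwh : HasDerivAt (wh d h w) ((h ^ d)⁻¹ * (deriv w (r / h) * (1 / h))) r :=
    (hw'.comp r ((hasDerivAt_id r).div_const h)).const_mul _
  have hderiv : deriv w (r / h) ≤ 0 := by
    rcases lt_or_ge (r / h) r₀ with hlt | hle
    · exact (hw.deriv_neg _ hrh hlt).le
    · exact (hw.deriv_eq_zero _ hle).le
  rw [dwh, hwh.deriv]
  exact mul_nonpos_of_nonneg_of_nonpos (by positivity)
    (mul_nonpos_of_nonpos_of_nonneg hderiv (by positivity))

theorem two_mul_sum_sum {M : Type*} [NonAssocSemiring M] {ι : Type*} (s : Finset ι)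
    (f : ι → ι → M) :
    2 * ∑ i ∈ s, ∑ j ∈ s, f i j = ∑ i ∈ s, ∑ j ∈ s, (f i j + f j i) := by
  rw [two_mul]
  nth_rewrite 2 [Finset.sum_comm]
  simp only [← Finset.sum_add_distrib]

section Operators

variable (x : Fin N → Pt d) (dw : ℝ → ℝ)

theorem gradW_swap (i j : Fin N) : gradW x dw j i = -gradW x dw i j := by
  rw [gradW, gradW, norm_sub_rev (x j) (x i), ← smul_neg, neg_sub]

-- At coincident points both sides vanish, through `a / 0 = 0`.
theorem sq_norm_gradW (i j : Fin N) :
    ‖gradW x dw i j‖ ^ 2 =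
      ‖x i - x j‖ * |dw ‖x i - x j‖| * (|dw ‖x i - x j‖| / ‖x i - x j‖) := by
  rcases (norm_nonneg (x i - x j)).eq_or_lt with hr | hr
  · rw [← hr, div_zero, mul_zero, sq_eq_zero_iff, norm_eq_zero, gradW, ← hr, div_zero, zero_smul]
  · rw [gradW, norm_smul, Real.norm_eq_abs, abs_div, abs_norm]
    field_simp

theorem dLap_eq_sum {F : Type*} [NormedAddCommGroup F] [InnerProductSpace ℝ F]
    (V : Fin N → ℝ) (Λ : Finset (Fin N)) (φ : Fin N → F) (i : Fin N) :
    dLap x V dw Λ φ i =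
      ∑ j ∈ Λ, (2 * V j * (dw ‖x i - x j‖ / ‖x i - x j‖)) • (φ i - φ j) := by
  rw [dLap, Finset.smul_sum, ← Finset.sum_erase Λ (a := i) (by simp)]
  refine Finset.sum_congr rfl fun j _ => ?_
  have hcoef : V j / ‖x i - x j‖ * ⟪‖x i - x j‖⁻¹ • (x i - x j), gradW x dw i j⟫ =
      V j * (dw ‖x i - x j‖ / ‖x i - x j‖) := by
    rw [gradW, real_inner_smul_left, real_inner_smul_right, real_inner_self_eq_norm_sq]
    rcases (norm_nonneg (x i - x j)).eq_or_lt with hr | hr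
    · simp [← hr]
    · field_simp
  rw [hcoef, smul_smul, mul_assoc]

theorem h1semiSq_eq_sum {F : Type*} [NormedAddCommGroup F] (V : Fin N → ℝ)
    (Λ : Finset (Fin N)) (φ : Fin N → F) :
    h1semiSq x V dw Λ φ = ∑ i ∈ Λ, V i * ∑ j ∈ Λ,
      V j * (‖φ i - φ j‖ ^ 2 / ‖x i - x j‖) * |dw ‖x i - x j‖| := by
  refine Finset.sum_congr rfl fun i _ => ?_
  rw [Finset.sum_erase Λ (by simp)]

theorem sum_mul_dLap (hdw : ∀ r, 0 < r → dw r ≤ 0) (V : Fin N → ℝ) (Λ : Finset (Fin N))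
    (p : Fin N → ℝ) :
    ∑ i ∈ Λ, V i * (p i * dLap x V dw Λ p i) = -h1semiSq x V dw Λ p := by
  have hcoef : ∀ i j, dw ‖x i - x j‖ / ‖x i - x j‖ = -(|dw ‖x i - x j‖| / ‖x i - x j‖) := by
    intro i j
    rcases (norm_nonneg (x i - x j)).eq_or_lt with hr | hr
    · simp [← hr]
    · rw [abs_of_nonpos (hdw _ hr), neg_div, neg_neg]
  have hsym := two_mul_sum_sum Λ fun i j =>
    V i * V j * (2 * (dw ‖x i - x j‖ / ‖x i - x j‖) * (p i * (p i - p j)))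
  have hexpand : ∑ i ∈ Λ, V i * (p i * dLap x V dw Λ p i) = ∑ i ∈ Λ, ∑ j ∈ Λ,
      V i * V j * (2 * (dw ‖x i - x j‖ / ‖x i - x j‖) * (p i * (p i - p j))) := by
    refine Finset.sum_congr rfl fun i _ => ?_
    simp only [dLap_eq_sum, Finset.mul_sum, smul_eq_mul]
    exact Finset.sum_congr rfl fun j _ => by ring
  have hpair : ∑ i ∈ Λ, ∑ j ∈ Λ,
      (V i * V j * (2 * (dw ‖x i - x j‖ / ‖x i - x j‖) * (p i * (p i - p j))) +
        V j * V i * (2 * (dw ‖x j - x i‖ / ‖x j - x i‖) * (p j * (p j - p i)))) =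
      -(2 * h1semiSq x V dw Λ p) := by
    rw [h1semiSq_eq_sum, Finset.mul_sum, ← Finset.sum_neg_distrib]
    refine Finset.sum_congr rfl fun i _ => ?_
    rw [Finset.mul_sum, Finset.mul_sum, ← Finset.sum_neg_distrib]
    refine Finset.sum_congr rfl fun j _ => ?_
    rw [norm_sub_rev (x j), hcoef, Real.norm_eq_abs, sq_abs]
    ring
  linarith

theorem sum_mul_dDiv (V : Fin N → ℝ) (Λ : Finset (Fin N)) (p : Fin N → ℝ)
    (u : Fin N → Pt d) :
    ∑ i ∈ Λ, V i * (p i * dDiv x V dw Λ u i) = -dInner V Λ (dGrad x V dw Λ p) u := by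
  have hsplit : ∑ i ∈ Λ, V i * (p i * dDiv x V dw Λ u i) + dInner V Λ (dGrad x V dw Λ p) u =
      ∑ i ∈ Λ, ∑ j ∈ Λ,
        V i * V j * (p i * ⟪u j, gradW x dw i j⟫ + p j * ⟪u i, gradW x dw i j⟫) := by
    simp only [dDiv, dInner, dGrad, Finset.mul_sum, sum_inner, ← Finset.sum_add_distrib]
    refine Finset.sum_congr rfl fun i _ => Finset.sum_congr rfl fun j _ => ?_
    rw [inner_add_left, real_inner_smul_left, real_inner_comm (u i)]
    ring
  have hanti := two_mul_sum_sum Λ fun i j =>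
    V i * V j * (p i * ⟪u j, gradW x dw i j⟫ + p j * ⟪u i, gradW x dw i j⟫)
  have hpair : ∀ i j, V i * V j * (p i * ⟪u j, gradW x dw i j⟫ + p j * ⟪u i, gradW x dw i j⟫) +
      V j * V i * (p j * ⟪u i, gradW x dw j i⟫ + p i * ⟪u j, gradW x dw j i⟫) = 0 := by
    intro i j
    rw [gradW_swap, inner_neg_right, inner_neg_right]
    ring
  simp only [hpair, Finset.sum_const_zero] at hanti
  linarith

theorem h1semiSq_eq_of_poisson (hdw : ∀ r, 0 < r → dw r ≤ 0) (V : Fin N → ℝ)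
    {Λfl Λsf : Finset (Fin N)} (hdisj : Disjoint Λfl Λsf) {p : Fin N → ℝ} {u : Fin N → Pt d}
    {c : ℝ} (hpsf : ∀ i ∈ Λsf, p i = 0)
    (hpois : ∀ i ∈ Λfl, dLap x V dw (Λfl ∪ Λsf) p i = c * dDiv x V dw (Λfl ∪ Λsf) u i) :
    h1semiSq x V dw (Λfl ∪ Λsf) p = c * dInner V (Λfl ∪ Λsf) (dGrad x V dw (Λfl ∪ Λsf) p) u := by
  have htest : ∑ i ∈ Λfl ∪ Λsf, V i * (p i * dLap x V dw (Λfl ∪ Λsf) p i) =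
      c * ∑ i ∈ Λfl ∪ Λsf, V i * (p i * dDiv x V dw (Λfl ∪ Λsf) u i) := by
    rw [Finset.mul_sum, Finset.sum_union hdisj, Finset.sum_union hdisj]
    congr 1
    · exact Finset.sum_congr rfl fun i hi => by rw [hpois i hi]; ring
    · exact Finset.sum_congr rfl fun i hi => by rw [hpsf i hi]; ring
  rw [sum_mul_dLap x dw hdw, sum_mul_dDiv] at htest
  linear_combination -htest

theorem sq_norm_dGrad_le {V : Fin N → ℝ} (hV : ∀ i, 0 ≤ V i) (Λ : Finset (Fin N))
    (p : Fin N → ℝ) (i : Fin N) :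
    ‖dGrad x V dw Λ p i‖ ^ 2 ≤ (∑ j ∈ Λ, V j * ‖x i - x j‖ * |dw ‖x i - x j‖|) *
      ∑ j ∈ Λ, V j * (‖p i - p j‖ ^ 2 / ‖x i - x j‖) * |dw ‖x i - x j‖| := by
  refine (pow_le_pow_left₀ (norm_nonneg _) (norm_sum_le _ _) 2).trans ?_
  refine Finset.sum_sq_le_sum_mul_sum_of_sq_le_mul Λ (fun j _ => by positivity [hV j])
    (fun j _ => by positivity [hV j]) fun j _ => le_of_eq ?_
  rw [norm_smul, mul_pow, sq_norm_gradW, Real.norm_eq_abs, sq_abs, Real.norm_eq_abs, sq_abs]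
  ring

theorem l2normSq_dGrad_le {V : Fin N → ℝ} (hV : ∀ i, 0 ≤ V i) {Λ : Finset (Fin N)} {A : ℝ}
    (hreg : ∀ i ∈ Λ, ∑ j ∈ Λ, V j * ‖x i - x j‖ * |dw ‖x i - x j‖| ≤ A) (p : Fin N → ℝ) :
    l2normSq V Λ (dGrad x V dw Λ p) ≤ A * h1semiSq x V dw Λ p := by
  rw [l2normSq, h1semiSq_eq_sum, Finset.mul_sum]
  refine Finset.sum_le_sum fun i hi => ?_
  have hnonneg : 0 ≤ ∑ j ∈ Λ, V j * (‖p i - p j‖ ^ 2 / ‖x i - x j‖) * |dw ‖x i - x j‖| :=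
    Finset.sum_nonneg fun j _ => by positivity [hV j]
  calc V i * ‖dGrad x V dw Λ p i‖ ^ 2
      ≤ V i * ((∑ j ∈ Λ, V j * ‖x i - x j‖ * |dw ‖x i - x j‖|) *
          ∑ j ∈ Λ, V j * (‖p i - p j‖ ^ 2 / ‖x i - x j‖) * |dw ‖x i - x j‖|) :=
        mul_le_mul_of_nonneg_left (sq_norm_dGrad_le x dw hV Λ p i) (hV i)
    _ ≤ A * (V i * ∑ j ∈ Λ, V j * (‖p i - p j‖ ^ 2 / ‖x i - x j‖) * |dw ‖x i - x j‖|) := by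
        rw [mul_left_comm]
        exact mul_le_mul_of_nonneg_right (hreg i hi) (mul_nonneg (hV i) hnonneg)

end Operators

section Norms

variable {F : Type*} [NormedAddCommGroup F] {V : Fin N → ℝ}

theorem l2normSq_nonneg (hV : ∀ i, 0 ≤ V i) (Λ : Finset (Fin N)) (φ : Fin N → F) :
    0 ≤ l2normSq V Λ φ :=
  Finset.sum_nonneg fun i _ => mul_nonneg (hV i) (sq_nonneg _)

theorem sq_l2norm (hV : ∀ i, 0 ≤ V i) (Λ : Finset (Fin N)) (φ : Fin N → F) :
    l2norm V Λ φ ^ 2 = l2normSq V Λ φ :=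
  Real.sq_sqrt (l2normSq_nonneg hV Λ φ)

theorem dInner_le_l2norm_mul_l2norm [InnerProductSpace ℝ F] (hV : ∀ i, 0 ≤ V i)
    (Λ : Finset (Fin N)) (φ ψ : Fin N → F) :
    dInner V Λ φ ψ ≤ l2norm V Λ φ * l2norm V Λ ψ := by
  have hnorms : dInner V Λ φ ψ ≤ ∑ i ∈ Λ, V i * (‖φ i‖ * ‖ψ i‖) :=
    Finset.sum_le_sum fun i _ => mul_le_mul_of_nonneg_left (real_inner_le_norm _ _) (hV i)
  have hcs : (∑ i ∈ Λ, V i * (‖φ i‖ * ‖ψ i‖)) ^ 2 ≤ l2normSq V Λ φ * l2normSq V Λ ψ :=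
    Finset.sum_sq_le_sum_mul_sum_of_sq_le_mul Λ (fun i _ => by positivity [hV i])
      (fun i _ => by positivity [hV i]) fun i _ => le_of_eq (by ring)
  rw [l2norm, l2norm, ← Real.sqrt_mul (l2normSq_nonneg hV Λ φ)]
  exact hnorms.trans ((le_abs_self _).trans (Real.abs_le_sqrt hcs))

end Norms

end ISPH

theorem statement9_general (N : ℕ)
    (x : Fin N → Pt 2)
    (V : Fin N → ℝ) (hV : ∀ i, 0 < V i)
    (w : ℝ → ℝ) (r₀ : ℝ) (hw : IsRefWeight 2 w r₀)
    (h : ℝ) (hh : 0 < h) (ρ Δt c₀ : ℝ) (hρ : 0 < ρ) (hΔt : 0 < Δt) (hc₀ : 0 < c₀)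
    (hreg : ∀ i, ∑ j : Fin N,
      V j * ‖x i - x j‖ * |dwh 2 h w ‖x i - x j‖| ≤ 2 + c₀ * Δt)
    (Λfl Λsf : Finset (Fin N)) (hdisj : Disjoint Λfl Λsf)
    (ustar : Fin N → Pt 2) (p : Fin N → ℝ)
    (hpsf : ∀ i ∈ Λsf, p i = 0)
    (hpois : ∀ i ∈ Λfl, dLap x V (dwh 2 h w) (Λfl ∪ Λsf) p i =
      (ρ / Δt) * dDiv x V (dwh 2 h w) (Λfl ∪ Λsf) ustar i) :
    l2norm V (Λfl ∪ Λsf) (dGrad x V (dwh 2 h w) (Λfl ∪ Λsf) p) ≤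
      (2 + c₀ * Δt) * (ρ / Δt) * l2norm V (Λfl ∪ Λsf) ustar := by
  set Λ := Λfl ∪ Λsf
  set dw := dwh 2 h w
  have hV₀ : ∀ i, 0 ≤ V i := fun i => (hV i).le
  have henergy := h1semiSq_eq_of_poisson x dw (fun r hr => hw.dwh_nonpos hh hr) V hdisj
    hpsf hpois
  have hgrad : l2normSq V Λ (dGrad x V dw Λ p) ≤ (2 + c₀ * Δt) * h1semiSq x V dw Λ p :=
    l2normSq_dGrad_le x dw hV₀ (fun i _ => (Finset.sum_le_sum_of_subset_of_nonneg
      (Finset.subset_univ Λ) fun j _ _ => by positivity [hV₀ j]).trans (hreg i)) p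
  set a := l2norm V Λ (dGrad x V dw Λ p)
  set b := l2norm V Λ ustar
  have hK : 0 ≤ (2 + c₀ * Δt) * (ρ / Δt) := by positivity
  have hsq : a * a ≤ a * ((2 + c₀ * Δt) * (ρ / Δt) * b) :=
    calc a * a = l2normSq V Λ (dGrad x V dw Λ p) := by rw [← sq, sq_l2norm hV₀]
      _ ≤ (2 + c₀ * Δt) * h1semiSq x V dw Λ p := hgrad
      _ = (2 + c₀ * Δt) * (ρ / Δt) * dInner V Λ (dGrad x V dw Λ p) ustar := by
        rw [henergy, mul_assoc]
      _ ≤ (2 + c₀ * Δt) * (ρ / Δt) * (a * b) :=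
        mul_le_mul_of_nonneg_left (dInner_le_l2norm_mul_l2norm hV₀ Λ _ _) hK
      _ = a * ((2 + c₀ * Δt) * (ρ / Δt) * b) := by ring
  have ha : 0 ≤ a := Real.sqrt_nonneg _
  rcases ha.eq_or_lt with ha_zero | ha_pos
  · rw [← ha_zero]
    exact mul_nonneg hK (Real.sqrt_nonneg _)
  · exact le_of_mul_le_mul_left hsq ha_pos

/-- under the semi-regularity condition (d = 2), the discrete gradient
of the pressure solving the discrete Poisson equation is bounded in the discrete `L²`
norm by the predicted velocity. -/
theorem statement9 (N : ℕ)
    (x : Fin N → Pt 2) (hx : Function.Injective x)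
    (V : Fin N → ℝ) (hV : ∀ i, 0 < V i)
    (w : ℝ → ℝ) (r₀ : ℝ) (hw : IsRefWeight 2 w r₀)
    (h : ℝ) (hh : 0 < h) (ρ Δt c₀ : ℝ) (hρ : 0 < ρ) (hΔt : 0 < Δt) (hc₀ : 0 < c₀)
    (hreg : ∀ i, ∑ j : Fin N,
      V j * ‖x i - x j‖ * |dwh 2 h w ‖x i - x j‖| ≤ 2 + c₀ * Δt)
    (Λfl Λsf : Finset (Fin N)) (hdisj : Disjoint Λfl Λsf)
    (ustar : Fin N → Pt 2) (p : Fin N → ℝ)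
    (hpsf : ∀ i ∈ Λsf, p i = 0)
    (hpois : ∀ i ∈ Λfl, dLap x V (dwh 2 h w) (Λfl ∪ Λsf) p i =
      (ρ / Δt) * dDiv x V (dwh 2 h w) (Λfl ∪ Λsf) ustar i) :
    l2norm V (Λfl ∪ Λsf) (dGrad x V (dwh 2 h w) (Λfl ∪ Λsf) p) ≤
      (2 + c₀ * Δt) * (ρ / Δt) * l2norm V (Λfl ∪ Λsf) ustar :=
  statement9_general N x V hV w r₀ hw h hh ρ Δt c₀ hρ hΔt hc₀ hreg Λfl Λsf hdisj ustar p hpsf hpois
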